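/- arXiv:math/0410059 — 2 statements merged into one kernel-verified Lean document; each statement's English description precedes it below -/
import Mathlib

section
/- Let d, g₀, g₁, p, k, η₁ be integers with d ≥ 1, g₀ ≥ 2d, g₁ ≥ 2d, p ≥ 0, k ≥ 0, k + p ≤ d, η₁ ≥ 0, and not both k = 0 and η₁ = 0. Then k·(1 − 2g₀ + 2d − 2p − k) + η₁·(2 − 2g₀ − 2g₁ + 2d) ≤ −2d + 1. -/
/-!
Both coefficients of the index are negative. The wrapping coefficient satisfies
`2 - 2g₀ - 2g₁ + 2d ≤ 2 - 6d ≤ 0`, and for `k ≥ 1` the twist coefficient satisfies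
`1 - 2g₀ + 2d - 2p - k ≤ -2d`. So if `k ≥ 1` the twist term alone is at most `-2d`, and if
`k = 0` then `η₁ ≥ 1` and the wrapping term is at most `2 - 6d ≤ 1 - 2d`.
-/

theorem separating_index_estimate_general (d g₀ g₁ p k η₁ : ℤ)
    (hd : 1 ≤ d) (hg₀ : 2 * d ≤ g₀) (hg₁ : 2 * d ≤ g₁)
    (hp : 0 ≤ p) (hk : 0 ≤ k) (hη : 0 ≤ η₁)
    (hne : ¬(k = 0 ∧ η₁ = 0)) :
    k * (1 - 2 * g₀ + 2 * d - 2 * p - k) + η₁ * (2 - 2 * g₀ - 2 * g₁ + 2 * d)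
      ≤ -2 * d + 1 := by
  have hwrap : 2 - 2 * g₀ - 2 * g₁ + 2 * d ≤ 2 - 6 * d := by linarith
  rcases hk.eq_or_lt with rfl | hk_pos
  · have hη_pos : 1 ≤ η₁ := hη.lt_of_ne fun h => hne ⟨rfl, h.symm⟩
    calc 0 * (1 - 2 * g₀ + 2 * d - 2 * p - 0) + η₁ * (2 - 2 * g₀ - 2 * g₁ + 2 * d)
        ≤ 2 - 2 * g₀ - 2 * g₁ + 2 * d := by
          simpa only [zero_mul, zero_add] using mul_le_of_one_le_left (by linarith) hη_pos
      _ ≤ -2 * d + 1 := by linarith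
  · have htwist : 1 - 2 * g₀ + 2 * d - 2 * p - k ≤ -2 * d := by linarith
    calc k * (1 - 2 * g₀ + 2 * d - 2 * p - k) + η₁ * (2 - 2 * g₀ - 2 * g₁ + 2 * d)
        ≤ (1 - 2 * g₀ + 2 * d - 2 * p - k) + 0 :=
          add_le_add (mul_le_of_one_le_left (by linarith) hk_pos)
            (mul_nonpos_of_nonneg_of_nonpos hη (by linarith))
      _ ≤ -2 * d + 1 := by linarith

/-- Index estimate for a separating Dehn twist: for (η₀,η₁) = (η₁+k, η₁) ≠ (0,0)
the relative index k(1-2g₀+2d-2p-k) + η₁(2-2g₀-2g₁+2d) is at most 1-2d. -/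
theorem separating_index_estimate (d g₀ g₁ p k η₁ : ℤ)
    (hd : 1 ≤ d) (hg₀ : 2 * d ≤ g₀) (hg₁ : 2 * d ≤ g₁)
    (hp : 0 ≤ p) (hk : 0 ≤ k) (hkp : k + p ≤ d) (hη : 0 ≤ η₁)
    (hne : ¬(k = 0 ∧ η₁ = 0)) :
    k * (1 - 2 * g₀ + 2 * d - 2 * p - k) + η₁ * (2 - 2 * g₀ - 2 * g₁ + 2 * d)
      ≤ -2 * d + 1 :=
  separating_index_estimate_general d g₀ g₁ p k η₁ hd hg₀ hg₁ hp hk hη hne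
end

section
/- Let a,b,c,d be real numbers with ad − bc = 1, and define ψ : {(t,x,y) ∈ ℝ³ : cx + d > 0} → ℝ³ by ψ(t,x,y) = (−cy + dt, (ax+b)/(cx+d), ay − bt). Then at every point (t,x,y) of the domain, the total derivative of ψ applied to the vector (1, 0, −x) equals (cx+d)·(1, 0, −x′), where x′ = (ax+b)/(cx+d); equivalently, for the mapping torus vector field R = ∂_t − x∂_y, Dψ(R) = (cx+d)·R′, where R′ = ∂_{t′} − x′∂_{y′} at the image point. -/
/-- The SL₂ℤ symmetry diffeomorphism ψ_A sends the mapping torus vector field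
R = ∂_t - x ∂_y to (cx+d) times R at the image point. -/
theorem psi_pushes_forward_R (a b c d : ℝ) (hdet : a * d - b * c = 1)
    (t x y : ℝ) (hx : 0 < c * x + d) :
    ∃ D : (ℝ × ℝ × ℝ) →L[ℝ] (ℝ × ℝ × ℝ),
      HasFDerivAt (fun p : ℝ × ℝ × ℝ =>
          (-c * p.2.2 + d * p.1, (a * p.2.1 + b) / (c * p.2.1 + d),
            a * p.2.2 - b * p.1)) D (t, x, y) ∧
      D (1, 0, -x) = (c * x + d) • ((1 : ℝ), (0 : ℝ), -((a * x + b) / (c * x + d))) := by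
  have h1 : HasFDerivAt (fun p : ℝ × ℝ × ℝ => p.1)
      (ContinuousLinearMap.fst ℝ ℝ (ℝ × ℝ)) (t, x, y) := hasFDerivAt_fst
  have h21 : HasFDerivAt (fun p : ℝ × ℝ × ℝ => p.2.1)
      ((ContinuousLinearMap.fst ℝ ℝ ℝ).comp (ContinuousLinearMap.snd ℝ ℝ (ℝ × ℝ)))
      (t, x, y) := hasFDerivAt_fst.comp _ hasFDerivAt_snd
  have h22 : HasFDerivAt (fun p : ℝ × ℝ × ℝ => p.2.2)
      ((ContinuousLinearMap.snd ℝ ℝ ℝ).comp (ContinuousLinearMap.snd ℝ ℝ (ℝ × ℝ)))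
      (t, x, y) := hasFDerivAt_snd.comp _ hasFDerivAt_snd
  have f1 := (h22.const_mul (-c)).add (h1.const_mul d)
  have hinv := (hasDerivAt_inv (ne_of_gt hx)).comp_hasFDerivAt (x := (t, x, y))
    ((h21.const_mul c).add_const d)
  have f2 := ((h21.const_mul a).add_const b).mul hinv
  simp only [div_eq_mul_inv]
  have f3 := (h22.const_mul a).sub (h1.const_mul b)
  refine ⟨_, HasFDerivAt.prodMk f1 (HasFDerivAt.prodMk f2 f3), ?_⟩
  have hxne : c * x + d ≠ 0 := ne_of_gt hx
  simp [Prod.ext_iff, ContinuousLinearMap.prod_apply]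
  field_simp
  have hxne' : x * c + d ≠ 0 := by rwa [mul_comm]
  field_simp
  ring
end
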